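/- The instruction set with methods {(F,F), (T,T), (I,I)} (set to 0, set to 1, get) is strictly 4-size-bounded functionally complete: every primitive Boolean-register instruction is realized by a sequence of length at most 4 over these methods, and no bound of 3 suffices (ntest(T,C) requires length 4). -/

import Mathlib

/-- Unary Boolean functions. -/
abbrev BFun := Bool → Bool

/-- Constant-false. -/ def Fb : BFun := fun _ => false
/-- Constant-true. -/  def Tb : BFun := fun _ => true
/-- Identity. -/       def Ib : BFun := fun b => b
/-- Complement. -/     def Cb : BFun := fun b => !b

/-- A Boolean-register method: a reply function and a content-update function. -/
abbrev Method := BFun × BFun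

/-- Primitive instructions for a Boolean register. -/
inductive PrimInstr
  | plain (m : Method)
  | ptest (m : Method)
  | ntest (m : Method)

/-- The method carried by a primitive instruction. -/
def PrimInstr.method : PrimInstr → Method
  | .plain m => m
  | .ptest m => m
  | .ntest m => m

/-- Semantics of a primitive instruction: on register content `b`, return the
new content and whether execution proceeds with the next instruction. -/
def sem : PrimInstr → Bool → Bool × Bool
  | .plain m, b => (m.2 b, true)
  | .ptest m, b => (m.2 b, m.1 b)
  | .ntest m, b => (m.2 b, !(m.1 b))

/-- Instructions occurring in instruction sequences: basic/test instructions,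
forward jumps, and the termination instruction. -/
inductive Instr
  | basic (u : PrimInstr)
  | jump (l : ℕ)
  | halt

/-- Fuel-bounded execution of an instruction sequence on a single Boolean
register, from position `pos` with register content `b`.  `some b'` means
termination with final content `b'`; `none` means divergence/inaction
(jump `#0`, running past the end, or fuel exhaustion). -/
def run : ℕ → List Instr → ℕ → Bool → Option Bool
  | 0, _, _, _ => none
  | fuel + 1, X, pos, b =>
    match X[pos]? with
    | none => none
    | some .halt => some b
    | some (.jump l) => if l = 0 then none else run fuel X (pos + l) b
    | some (.basic u) =>
        let r := sem u b
        run fuel X (pos + if r.2 then 1 else 2) r.1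

/-- The behaviour of an instruction sequence on initial content `b`.
Since all jumps move strictly forward, `X.length + 1` steps suffice. -/
def behav (X : List Instr) (b : Bool) : Option Bool := run (X.length + 1) X 0 b

/-- `X` is an instruction sequence over the method set `M`. -/
def overM (M : Set Method) (X : List Instr) : Prop :=
  ∀ u ∈ X, ∀ v : PrimInstr, u = Instr.basic v → v.method ∈ M

/-- `X` realizes the primitive instruction `u`: for every initial register
content and every number `n` of appended termination instructions, the two
instruction sequences have identical behaviour (termination vs. divergence,
exit position) and identical final register content. -/
def Realizes (X : List Instr) (u : PrimInstr) : Prop :=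
  ∀ (b : Bool) (n : ℕ),
    behav (Instr.basic u :: List.replicate n Instr.halt) b =
    behav (X ++ List.replicate n Instr.halt) b

/-- The instruction set with methods from `M` is `k`-size-bounded functionally
complete. -/
def kComplete (M : Set Method) (k : ℕ) : Prop :=
  ∀ u : PrimInstr, ∃ X : List Instr, overM M X ∧ X.length ≤ k ∧ Realizes X u


/-!
A primitive instruction `u` enters a realization only through its semantics
`sem u : Bool → Bool × Bool`: followed by `n` termination instructions it terminates exactly when
`n` reaches its exit position `1` or `2`. A sequence that matches `u` for `n ≤ 2` therefore
matches it for all `n`, since once it terminates further trailing instructions are never reached.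
Completeness thus needs one realizer per semantics, sixteen in all, checked by evaluation; the
longest, of length `4`, is the one for `ntest(T,C)`, which complements the content and skips.

For the lower bound, a jump of length `≥ 5` leaves any sequence of length `≤ 3` padded with two
termination instructions, so it may be capped at `5`. The sequences of length `≤ 3` over the three
methods then range over a finite alphabet of sixteen instructions, and an exhaustive check shows
that none of them agrees with `ntest(T,C)` for one and two trailing termination instructions.
-/

theorem run_append_of_eq_some {X Y : List Instr} {c : Bool} :
    ∀ {f f' pos b}, f ≤ f' → run f X pos b = some c → run f' (X ++ Y) pos b = some c
  | 0, _, _, _, _, h => by simp [run] at h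
  | _ + 1, 0, _, _, hf, _ => by omega
  | f + 1, f' + 1, pos, b, hf, h => by
    rw [run] at h ⊢
    cases hi : X[pos]? with
    | none => simp [hi] at h
    | some i =>
      rw [hi] at h
      rw [List.getElem?_append_left (List.getElem?_eq_some_iff.mp hi).1, hi]
      cases i with
      | halt => exact h
      | jump l =>
        simp only at h ⊢
        split_ifs at h ⊢
        exact run_append_of_eq_some (by omega) h
      | basic u => exact run_append_of_eq_some (by omega) h

theorem behav_append_of_eq_some {X : List Instr} {b c : Bool} (Y : List Instr)
    (h : behav X b = some c) : behav (X ++ Y) b = some c :=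
  run_append_of_eq_some (by simp) h

/-- `r = (new content, continue?)` is the semantics of a primitive instruction on the current
content; followed by `n` termination instructions it exits at position `1` or `2`. -/
def primOutcome (r : Bool × Bool) (n : ℕ) : Option Bool :=
  if (bif r.2 then 1 else 2) ≤ n then some r.1 else none

theorem behav_basic_cons_replicate_halt (u : PrimInstr) (n : ℕ) (b : Bool) :
    behav (.basic u :: List.replicate n .halt) b = primOutcome (sem u b) n := by
  rcases sem_eq : sem u b with ⟨c, _ | _⟩ <;>
    rcases n with _ | _ | n <;> simp [behav, run, primOutcome, sem_eq]

theorem primOutcome_of_two_le (r : Bool × Bool) {n : ℕ} (hn : 2 ≤ n) :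
    primOutcome r n = some r.1 := by
  obtain ⟨c, _ | _⟩ := r <;> simp [primOutcome] <;> omega

theorem realizes_of_forall_le_two {X : List Instr} {u : PrimInstr}
    (h : ∀ b, ∀ n ≤ 2, primOutcome (sem u b) n = behav (X ++ List.replicate n .halt) b) :
    Realizes X u := by
  intro b n
  rw [behav_basic_cons_replicate_halt]
  rcases le_or_gt n 2 with hn | hn
  · exact h b n hn
  obtain ⟨m, rfl⟩ : ∃ m, n = 2 + m := ⟨n - 2, by omega⟩
  have h2 : behav (X ++ List.replicate 2 .halt) b = some (sem u b).1 := by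
    rw [← h b 2 le_rfl, primOutcome_of_two_le _ le_rfl]
  rw [primOutcome_of_two_le _ (by omega), List.replicate_add, ← List.append_assoc,
    behav_append_of_eq_some _ h2]

abbrev Instr.plain (m : Method) : Instr := .basic (.plain m)
abbrev Instr.ptest (m : Method) : Instr := .basic (.ptest m)
abbrev Instr.ntest (m : Method) : Instr := .basic (.ntest m)

def setGetMethods : Set Method := {(Fb, Fb), (Tb, Tb), (Ib, Ib)}

/-- Indexed by the semantics `(new content, continue?)` of the instruction to be realized on
the contents `false` and `true`. -/
def setGetRealizer : Bool × Bool → Bool × Bool → List Instr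
  | (false, false), (false, false) => [.ptest (Fb, Fb)]
  | (false, false), (false, true) => [.ptest (Ib, Ib), .ptest (Fb, Fb), .ptest (Fb, Fb)]
  | (false, false), (true, false) => [.jump 2]
  | (false, false), (true, true) => [.ptest (Ib, Ib)]
  | (false, true), (false, false) => [.ptest (Ib, Ib), .ptest (Fb, Fb)]
  | (false, true), (false, true) => [.plain (Fb, Fb)]
  | (false, true), (true, false) => [.ntest (Ib, Ib)]
  | (false, true), (true, true) => []
  | (true, false), (false, false) => [.ptest (Ib, Ib), .ptest (Fb, Fb), .plain (Tb, Tb), .jump 2]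
  | (true, false), (false, true) => [.ptest (Ib, Ib), .ptest (Fb, Fb), .ntest (Tb, Tb)]
  | (true, false), (true, false) => [.ntest (Tb, Tb)]
  | (true, false), (true, true) => [.ntest (Ib, Ib), .ntest (Tb, Tb)]
  | (true, true), (false, false) => [.ntest (Ib, Ib), .ntest (Tb, Tb), .ptest (Fb, Fb)]
  | (true, true), (false, true) => [.ptest (Ib, Ib), .ptest (Fb, Fb), .plain (Tb, Tb)]
  | (true, true), (true, false) => [.ptest (Ib, Ib), .jump 3, .plain (Tb, Tb)]
  | (true, true), (true, true) => [.plain (Tb, Tb)]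

theorem overM_setGetRealizer (x y : Bool × Bool) : overM setGetMethods (setGetRealizer x y) := by
  rintro _ hi v rfl
  obtain ⟨_ | _, _ | _⟩ := x <;> obtain ⟨_ | _, _ | _⟩ := y <;>
    simp [setGetRealizer] at hi <;>
    rcases hi with rfl | rfl | rfl <;> simp [setGetMethods, PrimInstr.method]

theorem length_setGetRealizer_le (x y : Bool × Bool) : (setGetRealizer x y).length ≤ 4 := by
  decide +revert

theorem setGetRealizer_spec : ∀ x y : Bool × Bool, ∀ n ≤ 2,
    primOutcome x n = behav (setGetRealizer x y ++ List.replicate n .halt) false ∧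
    primOutcome y n = behav (setGetRealizer x y ++ List.replicate n .halt) true := by
  decide

theorem realizes_setGetRealizer (u : PrimInstr) :
    Realizes (setGetRealizer (sem u false) (sem u true)) u :=
  realizes_of_forall_le_two fun b n hn => by
    cases b
    exacts [(setGetRealizer_spec _ _ n hn).1, (setGetRealizer_spec _ _ n hn).2]

theorem kComplete_setGetMethods_four : kComplete setGetMethods 4 := fun u =>
  ⟨_, overM_setGetRealizer _ _, length_setGetRealizer_le _ _, realizes_setGetRealizer u⟩

theorem run_of_length_le {X : List Instr} {pos : ℕ} (h : X.length ≤ pos) (f : ℕ) (b : Bool) :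
    run f X pos b = none := by
  cases f <;> simp [run, List.getElem?_eq_none h]

def Instr.capJump (k : ℕ) : Instr → Instr
  | .jump l => .jump (min l k)
  | i => i

theorem run_map_capJump {k : ℕ} {X : List Instr} (hX : X.length ≤ k) :
    ∀ f pos b, run f (X.map (Instr.capJump k)) pos b = run f X pos b
  | 0, _, _ => rfl
  | f + 1, pos, b => by
    rw [run, run, List.getElem?_map]
    cases X[pos]? with
    | none => rfl
    | some i =>
      cases i with
      | halt => rfl
      | basic u => exact run_map_capJump hX f _ _
      | jump l =>
        simp only [Option.map_some, Instr.capJump]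
        rcases le_total l k with hl | hl
        · rw [min_eq_left hl]
          split_ifs
          exacts [rfl, run_map_capJump hX f _ _]
        · rw [min_eq_right hl, run_of_length_le (by simp; omega), run_of_length_le (by omega)]
          split_ifs <;> rfl

theorem behav_map_capJump {k n : ℕ} {X : List Instr} (h : X.length + n ≤ k) (b : Bool) :
    behav (X.map (Instr.capJump k) ++ List.replicate n .halt) b =
      behav (X ++ List.replicate n .halt) b := by
  have hmap : X.map (Instr.capJump k) ++ List.replicate n .halt =
      (X ++ List.replicate n Instr.halt).map (Instr.capJump k) := by
    rw [List.map_append, List.map_replicate]; rfl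
  rw [hmap, behav, behav, List.length_map]
  exact run_map_capJump (by simp; omega) _ _ _

def setGetAlphabet : List Instr :=
  [(Fb, Fb), (Tb, Tb), (Ib, Ib)].flatMap (fun m => [.plain m, .ptest m, .ntest m]) ++
    .halt :: (List.range 6).map .jump

theorem capJump_mem_setGetAlphabet {X : List Instr} (hX : overM setGetMethods X) {i : Instr}
    (hi : i ∈ X) : i.capJump 5 ∈ setGetAlphabet := by
  cases i with
  | halt => simp [setGetAlphabet, Instr.capJump]
  | jump l => simp [setGetAlphabet, Instr.capJump]
  | basic v =>
    have hv := hX _ hi v rfl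
    cases v <;> rcases hv with rfl | rfl | rfl <;> simp [setGetAlphabet, Instr.capJump]

theorem List.mem_sections_replicate {α : Type*} {A w : List α} (h : ∀ a ∈ w, a ∈ A) :
    w ∈ (List.replicate w.length A).sections := by
  induction w with
  | nil => simp
  | cons a w ih =>
    rw [List.mem_sections] at ih ⊢
    exact .cons (h a (by simp)) (ih fun c hc => h c (by simp [hc]))

set_option maxRecDepth 100000 in
theorem short_setGetAlphabet_words_miss_ntest :
    ∀ k ≤ 3, ∀ X ∈ (List.replicate k setGetAlphabet).sections,
    ¬ ∀ b, ∀ n ∈ [1, 2], primOutcome (sem (.ntest (Tb, Cb)) b) n =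
      behav (X ++ List.replicate n .halt) b := by
  decide +kernel

theorem not_realizes_ntest_of_length_le_three {X : List Instr} (hX : overM setGetMethods X)
    (hlen : X.length ≤ 3) : ¬ Realizes X (.ntest (Tb, Cb)) := by
  intro hR
  refine short_setGetAlphabet_words_miss_ntest _ (by simpa using hlen) (X.map (Instr.capJump 5))
    (List.mem_sections_replicate fun i hi => ?_) fun b n hn => ?_
  · obtain ⟨j, hj, rfl⟩ := List.mem_map.mp hi
    exact capJump_mem_setGetAlphabet hX hj
  · rw [behav_map_capJump (by simp at hn; omega), ← hR, behav_basic_cons_replicate_halt]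

theorem not_kComplete_setGetMethods_three : ¬ kComplete setGetMethods 3 := fun h =>
  let ⟨_, hX, hlen, hR⟩ := h (.ntest (Tb, Cb))
  not_realizes_ntest_of_length_le_three hX hlen hR

/-- The instruction set with methods {(F,F),(T,T),(I,I)} (set to 0, set to 1,
get) is strictly 4-size-bounded functionally complete. -/
theorem strictly_four_size_bounded_complete_set_get :
    kComplete ({(Fb, Fb), (Tb, Tb), (Ib, Ib)} : Set Method) 4 ∧
    ¬ kComplete ({(Fb, Fb), (Tb, Tb), (Ib, Ib)} : Set Method) 3 :=
  ⟨kComplete_setGetMethods_four, not_kComplete_setGetMethods_three⟩
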